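/- Let R be a commutative k-algebra and 𝔇 = Der(R), and suppose kLT(𝔇) acts coherently on R with v(E) acting as E and u(F; v(E)) acting as ∇_E F for a given connection ∇. Then the action of every labeled tree on R is completely determined by the action of 𝔇 on R together with the connection ∇; i.e., any two coherent actions agreeing on trees with at most three nodes (of the forms v(E) and u(F; v(E))) agree on all trees. -/
import Mathlib


/-- An ordered labeled subtree: a node with a label and an ordered list of children. -/
inductive LSub (D : Type) : Type
  | mk : D → List (LSub D) → LSub D

/-- An ordered rooted tree with unlabeled root and non-root nodes labeled in `D`,
represented by the list of subtrees attached to the root. -/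
abbrev LTree (D : Type) := List (LSub D)

mutual
  /-- Number of nodes of a labeled subtree. -/
  def sizeS {D : Type} : LSub D → Nat
    | .mk _ ts => 1 + sizeL ts
  /-- Total number of (labeled) nodes of a forest. -/
  def sizeL {D : Type} : List (LSub D) → Nat
    | [] => 0
    | t :: ts => sizeS t + sizeL ts
end

mutual
  /-- Graft pending subtrees (given by `f`, indexed by the preorder index of nodes)
  onto a subtree whose own preorder index is `i`; attached subtrees are prepended. -/
  def graftS {D : Type} (f : Nat → List (LSub D)) (i : Nat) : LSub D → LSub D
    | .mk d ts => .mk d (f i ++ graftL f (i + 1) ts)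
  def graftL {D : Type} (f : Nat → List (LSub D)) (i : Nat) : List (LSub D) → List (LSub D)
    | [] => []
    | t :: ts => graftS f i t :: graftL f (i + sizeS t) ts
end

/-- Graft pending subtrees onto a tree; the root has preorder index `0`. -/
def graft {D : Type} (f : Nat → List (LSub D)) (t : LTree D) : LTree D :=
  f 0 ++ graftL f 1 t

/-- All lists of length `m` with entries `< n` (choices of attachment nodes). -/
def choices : Nat → Nat → List (List Nat)
  | 0, _ => [[]]
  | m + 1, n => (List.range n).flatMap fun c => (choices m n).map (c :: ·)

/-- The Grossman–Larson product of two basis trees, as an element of the free module: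
the sum over all ways of attaching the root-subtrees of `T1` to nodes of `T2`. -/
noncomputable def mulT (k : Type) [Semiring k] {D : Type} (T1 T2 : LTree D) :
    LTree D →₀ k :=
  ((choices T1.length (1 + sizeL T2)).map fun c =>
    Finsupp.single
      (graft (fun i => (T1.zip c).filterMap fun p => if p.2 = i then some p.1 else none) T2)
      (1 : k)).sum

/-- `v E`: the two-node tree whose single non-root node is labeled `E`. -/
def vT {D : Type} (E : D) : LTree D := [.mk E []]

/-- `u(E; T₁,…,T_k)`: root has one child labeled `E`, with which the roots of the `Tᵢ`
are identified. -/
def uT {D : Type} (E : D) (Ts : List (LTree D)) : LTree D := [.mk E Ts.flatten]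

/-- `t(T₁,…,T_k)`: identify the roots of the `Tᵢ`. -/
def tT {D : Type} (Ts : List (LTree D)) : LTree D := Ts.flatten

/-- All decompositions of an ordered multiset into a sub-multiset and its complement
(used for the coproduct). -/
def splits {α : Type} : List α → List (List α × List α)
  | [] => [([], [])]
  | a :: l => ((splits l).map fun p => (a :: p.1, p.2)) ++ ((splits l).map fun p => (p.1, a :: p.2))

/-- The labeled node of `T` at position `(i, p)`: the `i`-th root-subtree, then follow
the path `p` of child indices. -/
def subAtL {D : Type} : List (LSub D) → Nat → List Nat → Option (LSub D)
  | [], _, _ => none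
  | t :: _, 0, [] => some t
  | .mk _ cs :: _, 0, j :: p => subAtL cs j p
  | _ :: ts, i + 1, p => subAtL ts i p

/-- Replace the node of `T` at position `(i, p)`: relabel it with `G` and replace the
subtree rooted there (its list of children) by `T'`. -/
def replaceAtL {D : Type} (G : D) (T' : List (LSub D)) :
    List (LSub D) → Nat → List Nat → List (LSub D)
  | [], _, _ => []
  | _ :: ts, 0, [] => .mk G T' :: ts
  | .mk d cs :: ts, 0, j :: p => .mk d (replaceAtL G T' cs j p) :: ts
  | t :: ts, i + 1, p => t :: replaceAtL G T' ts i p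

/-- A `kLT(𝔇)`-module algebra structure on `R` (𝔇 = Der(R)), described via the action
`act` of basis trees: the one-node tree acts as the identity, each tree acts `k`-linearly,
the action is compatible with the tree-attachment product, and satisfies the module
algebra (Hopf) condition with respect to the splitting coproduct. -/
def IsTreeAction (k R : Type) [CommRing k] [CommRing R] [Algebra k R]
    (act : LTree (Derivation k R R) → R → R) : Prop :=
  (∀ f : R, act [] f = f) ∧
  (∀ (T : LTree (Derivation k R R)) (a : k) (f g : R),
    act T (a • f + g) = a • act T f + act T g) ∧
  (∀ (T₁ T₂ : LTree (Derivation k R R)) (f : R),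
    ((mulT k T₁ T₂).sum fun T c => c • act T f) = act T₁ (act T₂ f)) ∧
  (∀ (T : LTree (Derivation k R R)) (f g : R),
    act T (f * g) = ((splits T).map fun q => act q.1 f * act q.2 g).sum)

/-- The `kLT(𝔇)`-module algebra structure `act` is *Leibnitz* if for every tree `T`,
every non-root node (at position `(i, p)`) whose label factors as `r • E`, and every
`s ∈ R`, `T·s = Σ_{(T_i)} (T_{i(1)}·r) (T(i, E, T_{i(2)})·s)`, the coproduct being taken
in the subtree `T_i` rooted at the node. -/
def IsLeibnitz (k R : Type) [CommRing k] [CommRing R] [Algebra k R]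
    (act : LTree (Derivation k R R) → R → R) : Prop :=
  ∀ (T : LTree (Derivation k R R)) (i : Nat) (p : List Nat)
    (D₀ : Derivation k R R) (Ti : List (LSub (Derivation k R R))),
    subAtL T i p = some (LSub.mk D₀ Ti) →
    ∀ (r : R) (E : Derivation k R R), D₀ = r • E →
    ∀ s : R,
      act T s =
        ((splits Ti).map fun q => act q.1 r * act (replaceAtL E q.2 T i p) s).sum

/-- The action `act` is *coherent* if any subtree whose root has a single child and which
acts on `R` as a derivation `E` may be replaced by the two-node tree `v(E)` without
changing the action of the ambient tree. -/
def IsCoherent (k R : Type) [CommRing k] [CommRing R] [Algebra k R]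
    (act : LTree (Derivation k R R) → R → R) : Prop :=
  ∀ (T : LTree (Derivation k R R)) (i : Nat) (p : List Nat)
    (d : Derivation k R R) (cs : List (LSub (Derivation k R R))) (E : Derivation k R R),
    subAtL T i p = some (LSub.mk d cs) →
    (∀ f : R, act [LSub.mk d cs] f = E f) →
    ∀ f : R, act T f = act (replaceAtL E [] T i p) f

/-- A connection on `Der(R)`. -/
def IsConnection (k R : Type) [CommRing k] [CommRing R] [Algebra k R]
    (c : Derivation k R R → Derivation k R R → Derivation k R R) : Prop :=
  (∀ E₁ E₂ F, c (E₁ + E₂) F = c E₁ F + c E₂ F) ∧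
  (∀ E F₁ F₂, c E (F₁ + F₂) = c E F₁ + c E F₂) ∧
  (∀ (f : R) (E F), c (f • E) F = f • c E F) ∧
  (∀ (f : R) (E F), c E (f • F) = f • c E F + (E f) • F)

namespace CAux
variable {D : Type}

def leaf (E : D) : LSub D := .mk E []
def lf (Ds : List D) : List (LSub D) := Ds.map leaf

@[simp] lemma lf_nil : lf ([] : List D) = [] := rfl
@[simp] lemma lf_cons (E : D) (Ds : List D) : lf (E :: Ds) = leaf E :: lf Ds := rfl
@[simp] lemma lf_append (a b : List D) : lf (a ++ b) = lf a ++ lf b := List.map_append ..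
@[simp] lemma length_lf (Ds : List D) : (lf Ds).length = Ds.length := List.length_map ..

@[simp] lemma sizeL_nil : sizeL ([] : List (LSub D)) = 0 := rfl
@[simp] lemma sizeL_cons (t : LSub D) (ts : List (LSub D)) :
    sizeL (t :: ts) = sizeS t + sizeL ts := rfl
@[simp] lemma sizeS_mk (d : D) (ts : List (LSub D)) : sizeS (.mk d ts) = 1 + sizeL ts := rfl

lemma one_le_sizeS (s : LSub D) : 1 ≤ sizeS s := by
  obtain ⟨d, ts⟩ := s; simp

@[simp] lemma sizeS_leaf (E : D) : sizeS (leaf E) = 1 := by simp [leaf]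

@[simp] lemma sizeL_lf (Ds : List D) : sizeL (lf Ds) = Ds.length := by
  induction Ds with
  | nil => rfl
  | cons E Ds ih => simp [ih, leaf, Nat.add_comm]

@[simp] lemma sizeL_singleton (s : LSub D) : sizeL [s] = sizeS s := by simp

lemma length_le_sizeL (l : List (LSub D)) : l.length ≤ sizeL l := by
  induction l with
  | nil => simp
  | cons t ts ih => have := one_le_sizeS t; simp; omega

lemma sizeS_add_of_mem {s : LSub D} {l : List (LSub D)} (h : s ∈ l) :
    sizeS s + (l.length - 1) ≤ sizeL l := by
  induction l with
  | nil => simp at h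
  | cons t ts ih =>
    rcases List.mem_cons.mp h with h | h
    · subst h; have := length_le_sizeL ts; simp; omega
    · have := ih h
      have h1 := one_le_sizeS t
      have h2 : ts ≠ [] := by rintro rfl; simp at h
      have h3 : 1 ≤ ts.length := List.length_pos_iff.mpr h2
      simp; omega

lemma sizeS_le_of_mem {s : LSub D} {l : List (LSub D)} (h : s ∈ l) : sizeS s ≤ sizeL l := by
  have := sizeS_add_of_mem h; omega

-- graft computations
@[simp] lemma graftL_nil (f : Nat → List (LSub D)) (i : Nat) : graftL f i [] = [] := by
  rw [graftL]

lemma graftL_eq_of_lt {X : List (LSub D)} {cc : Nat} (Ds : List D) (i0 : Nat) (h : cc < i0) :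
    graftL (fun i => if cc = i then X else []) i0 (lf Ds) = lf Ds := by
  induction Ds generalizing i0 with
  | nil => rfl
  | cons E Ds ih =>
    rw [lf_cons, graftL,
      ih (i0 + sizeS (leaf E)) (by simp only [leaf, sizeS_mk, sizeL_nil]; omega)]
    simp [graftS, leaf, Nat.ne_of_lt h, graftL_nil]

lemma graftL_set {X : List (LSub D)} (Ds : List D) (j i0 cc : Nat) (hj : j < Ds.length)
    (hcc : cc = i0 + j) :
    graftL (fun i => if cc = i then X else []) i0 (lf Ds) =
      lf (Ds.take j) ++ .mk (Ds.get ⟨j, hj⟩) X :: lf (Ds.drop (j + 1)) := by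
  induction Ds generalizing j i0 with
  | nil => simp at hj
  | cons E Ds ih =>
    cases j with
    | zero =>
      rw [lf_cons, graftL,
        graftL_eq_of_lt Ds (i0 + sizeS (leaf E))
          (by simp only [leaf, sizeS_mk, sizeL_nil]; omega)]
      simp [graftS, leaf, graftL_nil, show cc = i0 by omega]
    | succ j =>
      rw [lf_cons, graftL,
        ih j (i0 + sizeS (leaf E)) (by simpa using hj)
          (by simp only [leaf, sizeS_mk, sizeL_nil]; omega)]
      simp [graftS, leaf, graftL_nil, show ¬ cc = i0 by omega]

-- subAt / replaceAt computations
lemma subAtL_append (xs : List (LSub D)) (t : LSub D) (ts : List (LSub D)) :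
    subAtL (xs ++ t :: ts) xs.length [] = some t := by
  induction xs with
  | nil => simp [subAtL]
  | cons x xs ih => simpa [subAtL] using ih

lemma replaceAtL_append (G : D) (T' : List (LSub D)) (xs : List (LSub D)) (t : LSub D)
    (ts : List (LSub D)) :
    replaceAtL G T' (xs ++ t :: ts) xs.length [] = xs ++ .mk G T' :: ts := by
  induction xs with
  | nil => simp [replaceAtL]
  | cons x xs ih => simpa [replaceAtL] using ih

lemma subAtL_child (F : D) (ch : List (LSub D)) (j : Nat) :
    subAtL [LSub.mk F ch] 0 [j] = subAtL ch j [] := by simp [subAtL]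

lemma replaceAtL_child (G : D) (T' : List (LSub D)) (F : D) (ch : List (LSub D)) (j : Nat) :
    replaceAtL G T' [LSub.mk F ch] 0 [j] = [.mk F (replaceAtL G T' ch j [])] := by
  simp [replaceAtL]

variable {k R : Type} [CommRing k] [CommRing R] [Algebra k R]
variable {act : LTree (Derivation k R R) → R → R}

lemma choices_one (n : Nat) : choices 1 n = (List.range n).map (fun cc => [cc]) := by
  show choices (0 + 1) n = _
  rw [choices]
  induction (List.range n) with
  | nil => rfl
  | cons a l ih => simp only [List.flatMap_cons, ih, List.map_cons]; rfl

lemma sum_singles {ι : Type} (g : ι → LTree (Derivation k R R)) (h : LTree (Derivation k R R) → R)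
    (L : List ι) :
    ((L.map fun x => Finsupp.single (g x) (1 : k)).sum).sum (fun T c => c • h T)
      = (L.map fun x => h (g x)).sum := by
  induction L with
  | nil => simp
  | cons t L ih =>
    rw [List.map_cons, List.sum_cons, Finsupp.sum_add_index' (fun a => zero_smul k (h a))
      (fun a b₁ b₂ => add_smul b₁ b₂ (h a)), ih,
      Finsupp.sum_single_index (zero_smul k (h (g t))), one_smul]
    simp

lemma expand_single (hact : IsTreeAction k R act) (s : LSub (Derivation k R R))
    (T2 : LTree (Derivation k R R)) (f : R) :
    act [s] (act T2 f) =
      ((List.range (1 + sizeL T2)).map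
        (fun cc => act (graft (fun i => if cc = i then [s] else []) T2) f)).sum := by
  rw [← hact.2.2.1 [s] T2 f]
  have hf : ∀ cc : Nat,
      (fun i => ([s].zip [cc]).filterMap fun p => if p.2 = i then some p.1 else none)
        = (fun i => if cc = i then ([s] : List (LSub (Derivation k R R))) else []) := by
    intro cc; funext i
    by_cases hcc : cc = i <;> simp [hcc]
  show (mulT k [s] T2).sum (fun T c => c • act T f) = _
  rw [mulT]
  simp only [List.length_singleton, choices_one, List.map_map, Function.comp_def, hf]
  rw [sum_singles
    (fun cc => graft (fun i => if cc = i then ([s] : List (LSub (Derivation k R R))) else []) T2)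
    (fun T => act T f)]

variable {k R : Type} [CommRing k] [CommRing R] [Algebra k R]
variable {act : LTree (Derivation k R R) → R → R}

lemma uT_eq (F E : Derivation k R R) : uT F [vT E] = [LSub.mk F [leaf E]] := by
  simp [uT, vT, leaf]

lemma graft_zero (s : LSub (Derivation k R R)) (Ds : List (Derivation k R R)) :
    graft (fun i => if 0 = i then [s] else []) (lf Ds) = s :: lf Ds := by
  rw [graft, graftL_eq_of_lt Ds 1 (by omega)]
  simp

lemma graft_succ (s : LSub (Derivation k R R)) (Ds : List (Derivation k R R)) (j : Nat)
    (hj : j < Ds.length) :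
    graft (fun i => if j + 1 = i then [s] else []) (lf Ds) =
      lf (Ds.take j) ++ LSub.mk (Ds.get ⟨j, hj⟩) [s] :: lf (Ds.drop (j + 1)) := by
  rw [graft, graftL_set Ds j 1 (j + 1) hj (by omega)]
  simp

/-- The expansion of the action on a forest of leaves with one more leaf. -/
lemma expand_leaf (hact : IsTreeAction k R act) (hcoh : IsCoherent k R act)
    (c : Derivation k R R → Derivation k R R → Derivation k R R)
    (hv : ∀ (E : Derivation k R R) (f : R), act (vT E) f = E f)
    (hu : ∀ (E F : Derivation k R R) (f : R), act (uT F [vT E]) f = (c E F) f)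
    (E : Derivation k R R) (Ds : List (Derivation k R R)) (f : R) :
    act (lf (E :: Ds)) f
      = E (act (lf Ds) f)
        - ((List.range Ds.length).map
            (fun j => act (lf (Ds.set j (c E (Ds.getD j 0)))) f)).sum := by
  have h0 := expand_single hact (leaf E) (lf Ds) f
  have hv' : ∀ g, act [leaf E] g = E g := hv E
  rw [hv', sizeL_lf,
    Nat.add_comm 1 Ds.length, List.range_succ_eq_map, List.map_cons, List.sum_cons,
    List.map_map, graft_zero] at h0
  have hterm : ∀ j ∈ List.range Ds.length,
      act (graft (fun i => if j + 1 = i then [leaf E] else []) (lf Ds)) f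
        = act (lf (Ds.set j (c E (Ds.getD j 0)))) f := by
    intro j hj
    rw [List.mem_range] at hj
    have hlen : (lf (Ds.take j)).length = j := by
      simp [List.length_take]; omega
    have hsub := subAtL_append (lf (Ds.take j)) (LSub.mk (Ds.get ⟨j, hj⟩) [leaf E])
      (lf (Ds.drop (j + 1)))
    rw [hlen] at hsub
    have hrep := replaceAtL_append (c E (Ds.get ⟨j, hj⟩)) [] (lf (Ds.take j))
      (LSub.mk (Ds.get ⟨j, hj⟩) [leaf E]) (lf (Ds.drop (j + 1)))
    rw [hlen] at hrep
    have hactsub : ∀ g, act [LSub.mk (Ds.get ⟨j, hj⟩) [leaf E]] g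
        = (c E (Ds.get ⟨j, hj⟩)) g := by
      intro g; rw [← uT_eq, hu]
    have hset : lf (Ds.set j (c E (Ds.getD j 0)))
        = lf (Ds.take j) ++ LSub.mk (c E (Ds.get ⟨j, hj⟩)) [] :: lf (Ds.drop (j + 1)) := by
      rw [List.getD_eq_getElem Ds 0 hj, List.set_eq_take_append_cons_drop, if_pos hj]
      simp [lf, leaf, List.get_eq_getElem]
    rw [graft_succ (leaf E) Ds j hj,
      hcoh _ j [] (Ds.get ⟨j, hj⟩) [leaf E] (c E (Ds.get ⟨j, hj⟩)) hsub hactsub f, hrep, hset]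
  simp only [Function.comp_def, Nat.succ_eq_add_one] at h0
  rw [List.map_congr_left hterm] at h0
  rw [lf_cons, h0]; ring
variable {k R : Type} [CommRing k] [CommRing R] [Algebra k R]
variable {act : LTree (Derivation k R R) → R → R}

lemma graft_node (f : Nat → List (LSub (Derivation k R R))) (F : Derivation k R R)
    (ls : List (LSub (Derivation k R R))) :
    graft f [LSub.mk F ls] = f 0 ++ [LSub.mk F (f 1 ++ graftL f 2 ls)] := by
  rw [graft, graftL, graftL_nil, graftS]

/-- Expansion of the action on `u(F; v E, v E₂, …)` -/
lemma expand_node (hact : IsTreeAction k R act) (hcoh : IsCoherent k R act)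
    (c : Derivation k R R → Derivation k R R → Derivation k R R)
    (hv : ∀ (E : Derivation k R R) (f : R), act (vT E) f = E f)
    (hu : ∀ (E F : Derivation k R R) (f : R), act (uT F [vT E]) f = (c E F) f)
    (E F E' : Derivation k R R) (Es : List (Derivation k R R))
    (hE' : ∀ g, act [LSub.mk F (lf Es)] g = E' g) (f : R) :
    act [LSub.mk F (lf (E :: Es))] f
      = E (act [LSub.mk F (lf Es)] f) - act (lf [E, E']) f
        - ((List.range Es.length).map
            (fun j => act [LSub.mk F (lf (Es.set j (c E (Es.getD j 0))))] f)).sum := by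
  have h0 := expand_single hact (leaf E) [LSub.mk F (lf Es)] f
  have hv' : ∀ g, act [leaf E] g = E g := hv E
  have hsz : 1 + sizeL [LSub.mk F (lf Es)] = Es.length + 1 + 1 := by simp; omega
  rw [hv', hsz, List.range_succ_eq_map, List.range_succ_eq_map] at h0
  simp only [List.map_cons, List.sum_cons, List.map_map, Function.comp_def,
    Nat.succ_eq_add_one] at h0
  -- the three kinds of graft terms
  have g0 : graft (fun i => if 0 = i then [leaf E] else []) [LSub.mk F (lf Es)]
      = [leaf E, LSub.mk F (lf Es)] := by
    rw [graft_node, graftL_eq_of_lt Es 2 (by omega)]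
    simp
  have g1 : graft (fun i => if 0 + 1 = i then [leaf E] else []) [LSub.mk F (lf Es)]
      = [LSub.mk F (lf (E :: Es))] := by
    rw [graft_node, graftL_eq_of_lt Es 2 (by omega)]
    simp
  have gj : ∀ j, (hj : j < Es.length) →
      graft (fun i => if j + 1 + 1 = i then [leaf E] else []) [LSub.mk F (lf Es)]
        = [LSub.mk F (lf (Es.take j) ++
            LSub.mk (Es.get ⟨j, hj⟩) [leaf E] :: lf (Es.drop (j + 1)))] := by
    intro j hj
    rw [graft_node, graftL_set Es j 2 (j + 1 + 1) hj (by omega)]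
    simp
  rw [g0, g1] at h0
  -- convert the first term by coherence
  have c0 : act [leaf E, LSub.mk F (lf Es)] f = act (lf [E, E']) f := by
    have hsub : subAtL [leaf E, LSub.mk F (lf Es)] 1 [] = some (LSub.mk F (lf Es)) := by
      simp [subAtL]
    rw [hcoh _ 1 [] F (lf Es) E' hsub hE' f]
    simp [replaceAtL, lf, leaf]
  rw [c0] at h0
  -- convert the later terms by coherence
  have hterm : ∀ j ∈ List.range Es.length,
      act (graft (fun i => if j + 1 + 1 = i then [leaf E] else []) [LSub.mk F (lf Es)]) f
        = act [LSub.mk F (lf (Es.set j (c E (Es.getD j 0))))] f := by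
    intro j hj
    rw [List.mem_range] at hj
    have hlen : (lf (Es.take j)).length = j := by
      simp [List.length_take]; omega
    have hsub := subAtL_append (lf (Es.take j)) (LSub.mk (Es.get ⟨j, hj⟩) [leaf E])
      (lf (Es.drop (j + 1)))
    rw [hlen] at hsub
    have hsub' : subAtL [LSub.mk F (lf (Es.take j) ++
          LSub.mk (Es.get ⟨j, hj⟩) [leaf E] :: lf (Es.drop (j + 1)))] 0 [j]
        = some (LSub.mk (Es.get ⟨j, hj⟩) [leaf E]) := by
      rw [subAtL_child]; exact hsub
    have hrep := replaceAtL_append (c E (Es.get ⟨j, hj⟩)) [] (lf (Es.take j))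
      (LSub.mk (Es.get ⟨j, hj⟩) [leaf E]) (lf (Es.drop (j + 1)))
    rw [hlen] at hrep
    have hactsub : ∀ g, act [LSub.mk (Es.get ⟨j, hj⟩) [leaf E]] g
        = (c E (Es.get ⟨j, hj⟩)) g := by
      intro g; rw [← uT_eq, hu]
    have hset : lf (Es.set j (c E (Es.getD j 0)))
        = lf (Es.take j) ++ LSub.mk (c E (Es.get ⟨j, hj⟩)) [] :: lf (Es.drop (j + 1)) := by
      rw [List.getD_eq_getElem Es 0 hj, List.set_eq_take_append_cons_drop, if_pos hj]
      simp [lf, leaf, List.get_eq_getElem]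
    rw [gj j hj,
      hcoh _ 0 [j] (Es.get ⟨j, hj⟩) [leaf E] (c E (Es.get ⟨j, hj⟩)) hsub' hactsub f,
      replaceAtL_child, hrep, hset]
  rw [List.map_congr_left hterm] at h0
  rw [h0]; ring

variable {k R : Type} [CommRing k] [CommRing R] [Algebra k R]
variable {act : LTree (Derivation k R R) → R → R}

lemma norm_roots (hcoh : IsCoherent k R act) (der : LSub (Derivation k R R) → Derivation k R R) :
    ∀ (ts : List (LSub (Derivation k R R))) (pre : List (Derivation k R R)),
      (∀ s ∈ ts, ∀ g, act [s] g = der s g) →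
      ∀ f, act (lf pre ++ ts) f = act (lf (pre ++ ts.map der)) f := by
  intro ts
  induction ts with
  | nil => intro pre _ f; simp
  | cons s ts ih =>
    intro pre hd f
    obtain ⟨d, cs⟩ := s
    have hsub := subAtL_append (lf pre) (LSub.mk d cs) ts
    rw [length_lf] at hsub
    have hrep := replaceAtL_append (der (LSub.mk d cs)) [] (lf pre) (LSub.mk d cs) ts
    rw [length_lf] at hrep
    rw [hcoh _ pre.length [] d cs (der (LSub.mk d cs)) hsub (hd _ (by simp)) f, hrep]
    have h2 : lf pre ++ LSub.mk (der (LSub.mk d cs)) [] :: ts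
        = lf (pre ++ [der (LSub.mk d cs)]) ++ ts := by simp [leaf]
    rw [h2, ih (pre ++ [der (LSub.mk d cs)]) (fun s hs g => hd s (by simp [hs]) g) f]
    simp

lemma norm_children (hcoh : IsCoherent k R act)
    (der : LSub (Derivation k R R) → Derivation k R R) :
    ∀ (cs : List (LSub (Derivation k R R))) (F : Derivation k R R)
      (pre : List (Derivation k R R)),
      (∀ s ∈ cs, ∀ g, act [s] g = der s g) →
      ∀ f, act [LSub.mk F (lf pre ++ cs)] f = act [LSub.mk F (lf (pre ++ cs.map der))] f := by
  intro cs
  induction cs with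
  | nil => intro F pre _ f; simp
  | cons s cs ih =>
    intro F pre hd f
    obtain ⟨d, cs'⟩ := s
    have hsub := subAtL_append (lf pre) (LSub.mk d cs') cs
    rw [length_lf] at hsub
    have hsub' : subAtL [LSub.mk F (lf pre ++ LSub.mk d cs' :: cs)] 0 [pre.length]
        = some (LSub.mk d cs') := by rw [subAtL_child]; exact hsub
    have hrep := replaceAtL_append (der (LSub.mk d cs')) [] (lf pre) (LSub.mk d cs') cs
    rw [length_lf] at hrep
    rw [hcoh _ 0 [pre.length] d cs' (der (LSub.mk d cs')) hsub' (hd _ (by simp)) f,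
      replaceAtL_child, hrep]
    have h2 : lf pre ++ LSub.mk (der (LSub.mk d cs')) [] :: cs
        = lf (pre ++ [der (LSub.mk d cs')]) ++ cs := by simp [leaf]
    rw [h2, ih F (pre ++ [der (LSub.mk d cs')]) (fun s hs g => hd s (by simp [hs]) g) f]
    simp

lemma leaf_shared {act₁ act₂ : LTree (Derivation k R R) → R → R}
    (hact₁ : IsTreeAction k R act₁) (hact₂ : IsTreeAction k R act₂)
    (hcoh₁ : IsCoherent k R act₁) (hcoh₂ : IsCoherent k R act₂)
    (c : Derivation k R R → Derivation k R R → Derivation k R R)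
    (hv₁ : ∀ (E : Derivation k R R) (f : R), act₁ (vT E) f = E f)
    (hv₂ : ∀ (E : Derivation k R R) (f : R), act₂ (vT E) f = E f)
    (hu₁ : ∀ (E F : Derivation k R R) (f : R), act₁ (uT F [vT E]) f = (c E F) f)
    (hu₂ : ∀ (E F : Derivation k R R) (f : R), act₂ (uT F [vT E]) f = (c E F) f) :
    ∀ (m : Nat) (Ds : List (Derivation k R R)), Ds.length = m →
      ∀ f, act₁ (lf Ds) f = act₂ (lf Ds) f := by
  intro m
  induction m with
  | zero =>
    intro Ds h f
    rw [List.length_eq_zero_iff] at h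
    subst h
    rw [lf_nil, hact₁.1, hact₂.1]
  | succ m ih =>
    intro Ds h f
    cases Ds with
    | nil => simp at h
    | cons E Ds =>
      rw [expand_leaf hact₁ hcoh₁ c hv₁ hu₁ E Ds f, expand_leaf hact₂ hcoh₂ c hv₂ hu₂ E Ds f,
        ih Ds (by simpa using h) f,
        List.map_congr_left (fun j (hj : j ∈ List.range Ds.length) =>
          ih (Ds.set j (c E (Ds.getD j 0))) (by simpa using h) f)]


theorem main
    (k R : Type) [Field k] [CommRing R] [Algebra k R]
    (c : Derivation k R R → Derivation k R R → Derivation k R R)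
    (hc : IsConnection k R c)
    (act₁ act₂ : LTree (Derivation k R R) → R → R)
    (hact₁ : IsTreeAction k R act₁) (hact₂ : IsTreeAction k R act₂)
    (hcoh₁ : IsCoherent k R act₁) (hcoh₂ : IsCoherent k R act₂)
    (hder₁ : ∀ s : LSub (Derivation k R R), ∃ E : Derivation k R R, ∀ f, act₁ [s] f = E f)
    (hder₂ : ∀ s : LSub (Derivation k R R), ∃ E : Derivation k R R, ∀ f, act₂ [s] f = E f)
    (hv₁ : ∀ (E : Derivation k R R) (f : R), act₁ (vT E) f = E f)
    (hv₂ : ∀ (E : Derivation k R R) (f : R), act₂ (vT E) f = E f)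
    (hu₁ : ∀ (E F : Derivation k R R) (f : R), act₁ (uT F [vT E]) f = (c E F) f)
    (hu₂ : ∀ (E F : Derivation k R R) (f : R), act₂ (uT F [vT E]) f = (c E F) f) :
    ∀ (T : LTree (Derivation k R R)) (f : R), act₁ T f = act₂ T f := by
  classical
  have hls := leaf_shared hact₁ hact₂ hcoh₁ hcoh₂ c hv₁ hv₂ hu₁ hu₂
  set der : LSub (Derivation k R R) → Derivation k R R := fun s => (hder₁ s).choose with hder_def
  have hder : ∀ s : LSub (Derivation k R R), ∀ g, act₁ [s] g = der s g :=
    fun s => (hder₁ s).choose_spec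
  suffices H : ∀ (n : Nat) (T : LTree (Derivation k R R)), sizeL T = n →
      ∀ f, act₁ T f = act₂ T f by
    exact fun T f => H (sizeL T) T rfl f
  intro n
  induction n using Nat.strong_induction_on with
  | _ n IH =>
    intro T hT f
    rcases T with _ | ⟨⟨F, cs⟩, ts⟩
    · rw [hact₁.1, hact₂.1]
    rcases ts with _ | ⟨s2, ts⟩
    · -- single root subtree
      have hn : n = 1 + sizeL cs := by rw [← hT]; simp
      have hcs : cs.length ≤ sizeL cs := length_le_sizeL cs
      have hmem : ∀ s ∈ cs, ∀ g, act₂ [s] g = der s g := by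
        intro s hs g
        have hlt : sizeS s < n := by
          have := sizeS_le_of_mem hs; omega
        rw [← IH (sizeS s) hlt [s] (by simp) g]
        exact hder s g
      have h1 := norm_children hcoh₁ der cs F [] (fun s _ => hder s) f
      have h2 := norm_children hcoh₂ der cs F [] hmem f
      simp only [lf_nil, List.nil_append] at h1 h2
      rw [h1, h2]
      rcases hDs : cs.map der with _ | ⟨E, Es⟩
      · rw [show [LSub.mk F (lf ([] : List (Derivation k R R)))] = vT F from rfl, hv₁, hv₂]
      · have hlength : cs.length = Es.length + 1 := by
          have := congrArg List.length hDs
          simpa using this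
        by_cases hcase : 1 + (Es.length + 1) < n
        · refine IH (1 + (Es.length + 1)) hcase [LSub.mk F (lf (E :: Es))] ?_ f
          simp
          omega
        · have hEq2 : n = Es.length + 2 := by omega
          set E' := der (LSub.mk F (lf Es)) with hE'def
          have hE'₁ : ∀ g, act₁ [LSub.mk F (lf Es)] g = E' g := hder _
          have hE'₂ : ∀ g, act₂ [LSub.mk F (lf Es)] g = E' g := by
            intro g
            rw [← IH (1 + Es.length) (by omega) [LSub.mk F (lf Es)] (by simp) g]
            exact hE'₁ g
          rw [expand_node hact₁ hcoh₁ c hv₁ hu₁ E F E' Es hE'₁ f,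
            expand_node hact₂ hcoh₂ c hv₂ hu₂ E F E' Es hE'₂ f,
            IH (1 + Es.length) (by omega) [LSub.mk F (lf Es)] (by simp) f,
            hls 2 [E, E'] rfl f,
            List.map_congr_left (fun j (hj : j ∈ List.range Es.length) =>
              IH (1 + Es.length) (by omega) [LSub.mk F (lf (Es.set j (c E (Es.getD j 0))))]
                (by simp) f)]
    · -- at least two root subtrees
      have hmem : ∀ s ∈ (LSub.mk F cs :: s2 :: ts), ∀ g, act₂ [s] g = der s g := by
        intro s hs g
        have hlt : sizeS s < n := by
          have h1 := sizeS_add_of_mem hs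
          have h2 := one_le_sizeS (LSub.mk F cs)
          have h3 := one_le_sizeS s2
          rw [← hT]
          simp at h1 ⊢
          omega
        rw [← IH (sizeS s) hlt [s] (by simp) g]
        exact hder s g
      have h1 := norm_roots hcoh₁ der (LSub.mk F cs :: s2 :: ts) [] (fun s _ => hder s) f
      have h2 := norm_roots hcoh₂ der (LSub.mk F cs :: s2 :: ts) [] hmem f
      simp only [lf_nil, List.nil_append] at h1 h2
      rw [h1, h2]
      exact hls _ _ rfl f

end CAux

/-- **Theorem.** Let `R` be a commutative `k`-algebra, `𝔇 = Der(R)`, and `∇` a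
connection on `𝔇`.  A coherent `kLT(𝔇)`-module algebra action on `R` under which `v(E)`
acts as `E` and `u(F; v(E))` acts as `∇_E F` is completely determined by these data:
any two such coherent actions agree on all trees. -/
theorem coherent_action_determined_by_connection
    (k R : Type) [Field k] [CommRing R] [Algebra k R]
    (c : Derivation k R R → Derivation k R R → Derivation k R R)
    (hc : IsConnection k R c)
    (act₁ act₂ : LTree (Derivation k R R) → R → R)
    (hact₁ : IsTreeAction k R act₁) (hact₂ : IsTreeAction k R act₂)
    (hcoh₁ : IsCoherent k R act₁) (hcoh₂ : IsCoherent k R act₂)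
    (hder₁ : ∀ s : LSub (Derivation k R R), ∃ E : Derivation k R R, ∀ f, act₁ [s] f = E f)
    (hder₂ : ∀ s : LSub (Derivation k R R), ∃ E : Derivation k R R, ∀ f, act₂ [s] f = E f)
    -- both actions agree on trees with at most three nodes, of the forms `v(E)` and
    -- `u(F; v(E))`: `v(E)` acts as `E` and `u(F; v(E))` acts as `∇_E F`
    (hv₁ : ∀ (E : Derivation k R R) (f : R), act₁ (vT E) f = E f)
    (hv₂ : ∀ (E : Derivation k R R) (f : R), act₂ (vT E) f = E f)
    (hu₁ : ∀ (E F : Derivation k R R) (f : R), act₁ (uT F [vT E]) f = (c E F) f)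
    (hu₂ : ∀ (E F : Derivation k R R) (f : R), act₂ (uT F [vT E]) f = (c E F) f) :
    ∀ (T : LTree (Derivation k R R)) (f : R), act₁ T f = act₂ T f := CAux.main k R c hc act₁ act₂ hact₁ hact₂ hcoh₁ hcoh₂ hder₁ hder₂ hv₁ hv₂ hu₁ hu₂
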